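/- Let E and F be Banach spaces over 𝕜 (= ℝ or ℂ), m ≥ 1, and P ∈ 𝒫(^mE;F). The following are equivalent: (a) P has finite rank, i.e. the linear span of the range of P is finite dimensional; (b) for every k ≥ 1 the continuous linear operator Δ_k^1 P : 𝒫(^kF) → 𝒫(^{mk}E), q ↦ q ∘ P, has finite rank; (c) there exists some k ≥ 1 such that Δ_k^1 P has finite rank. -/

import Mathlib

open scoped NNReal ENNReal

/-- `P : E → F` is a continuous `m`-homogeneous polynomial: it is generated by a
continuous `m`-linear map. -/
def IsHomPoly (𝕜 : Type*) [RCLike 𝕜] (m : ℕ) {E F : Type*}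
    [NormedAddCommGroup E] [NormedSpace 𝕜 E] [NormedAddCommGroup F] [NormedSpace 𝕜 F]
    (P : E → F) : Prop :=
  ∃ A : ContinuousMultilinearMap 𝕜 (fun _ : Fin m => E) F, ∀ x, P x = A (fun _ => x)

/-- The sup norm over the closed unit ball. -/
noncomputable def polyNorm {E F : Type*} [Norm E] [Norm F] (P : E → F) : ℝ :=
  sSup ((fun x => ‖P x‖) '' {x : E | ‖x‖ ≤ 1})

/-- The space `𝒫(^m E; F)` of continuous `m`-homogeneous polynomials. -/
structure HPoly (𝕜 : Type*) [RCLike 𝕜] (m : ℕ) (E F : Type*)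
    [NormedAddCommGroup E] [NormedSpace 𝕜 E] [NormedAddCommGroup F] [NormedSpace 𝕜 F] where
  toFun : E → F
  isPoly' : IsHomPoly 𝕜 m toFun

namespace HPoly

variable {𝕜 : Type*} [RCLike 𝕜] {m : ℕ} {E F : Type*}
  [NormedAddCommGroup E] [NormedSpace 𝕜 E] [NormedAddCommGroup F] [NormedSpace 𝕜 F]

instance : FunLike (HPoly 𝕜 m E F) E F where
  coe P := P.toFun
  coe_injective := by rintro ⟨f, hf⟩ ⟨g, hg⟩ h; simpa using h

@[ext] theorem ext {P Q : HPoly 𝕜 m E F} (h : ∀ x, P x = Q x) : P = Q := DFunLike.ext _ _ h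

theorem isPoly (P : HPoly 𝕜 m E F) : IsHomPoly 𝕜 m ⇑P := P.isPoly'

instance : Zero (HPoly 𝕜 m E F) := ⟨⟨fun _ => 0, ⟨0, by simp⟩⟩⟩

@[simp] theorem zero_apply (x : E) : (0 : HPoly 𝕜 m E F) x = 0 := rfl

instance : Add (HPoly 𝕜 m E F) :=
  ⟨fun P Q => ⟨fun x => P x + Q x, by
    obtain ⟨A, hA⟩ := P.isPoly'
    obtain ⟨B, hB⟩ := Q.isPoly'
    refine ⟨A + B, fun x => ?_⟩
    show P.toFun x + Q.toFun x = (A + B) fun _ => x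
    rw [ContinuousMultilinearMap.add_apply, hA x, hB x]⟩⟩

@[simp] theorem add_apply (P Q : HPoly 𝕜 m E F) (x : E) : (P + Q) x = P x + Q x := rfl

instance : Neg (HPoly 𝕜 m E F) :=
  ⟨fun P => ⟨fun x => -P x, by
    obtain ⟨A, hA⟩ := P.isPoly'
    refine ⟨-A, fun x => ?_⟩
    show -P.toFun x = (-A) fun _ => x
    rw [ContinuousMultilinearMap.neg_apply, hA x]⟩⟩

@[simp] theorem neg_apply (P : HPoly 𝕜 m E F) (x : E) : (-P) x = -P x := rfl

instance : SMul 𝕜 (HPoly 𝕜 m E F) :=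
  ⟨fun c P => ⟨fun x => c • P x, by
    obtain ⟨A, hA⟩ := P.isPoly'
    refine ⟨c • A, fun x => ?_⟩
    show c • P.toFun x = (c • A) fun _ => x
    rw [ContinuousMultilinearMap.smul_apply, hA x]⟩⟩

@[simp] theorem smul_apply (c : 𝕜) (P : HPoly 𝕜 m E F) (x : E) : (c • P) x = c • P x := rfl

instance : AddCommGroup (HPoly 𝕜 m E F) where
  add_assoc P Q R := by ext x; simp [add_assoc]
  zero_add P := by ext x; simp
  add_zero P := by ext x; simp
  add_comm P Q := by ext x; simp [add_comm]
  neg_add_cancel P := by ext x; simp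
  nsmul := nsmulRec
  zsmul := zsmulRec

instance : Module 𝕜 (HPoly 𝕜 m E F) where
  one_smul P := by ext x; simp
  mul_smul a b P := by ext x; simp [mul_smul]
  smul_zero a := by ext x; simp
  smul_add a P Q := by ext x; simp
  add_smul a b P := by ext x; simp [add_smul]
  zero_smul P := by ext x; simp

theorem bddAbove_image (P : HPoly 𝕜 m E F) :
    BddAbove ((fun x => ‖P x‖) '' {x : E | ‖x‖ ≤ 1}) := by
  obtain ⟨A, hA⟩ := P.isPoly'
  refine ⟨‖A‖, ?_⟩
  rintro r ⟨x, hx, rfl⟩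
  show ‖P.toFun x‖ ≤ ‖A‖
  rw [hA x]
  calc ‖A fun _ => x‖ ≤ ‖A‖ * ∏ _i : Fin m, ‖x‖ := A.le_opNorm _
    _ ≤ ‖A‖ * 1 := by
        refine mul_le_mul_of_nonneg_left ?_ (norm_nonneg A)
        rw [Finset.prod_const]
        exact pow_le_one₀ (norm_nonneg x) hx
    _ = ‖A‖ := mul_one _

theorem polyNorm_coe_nonneg (P : HPoly 𝕜 m E F) : 0 ≤ polyNorm ⇑P :=
  le_trans (norm_nonneg (P 0)) (le_csSup (bddAbove_image P) ⟨0, by simp, rfl⟩)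

noncomputable instance : NormedAddCommGroup (HPoly 𝕜 m E F) :=
  AddGroupNorm.toNormedAddCommGroup
    { toFun := fun P => polyNorm (⇑P)
      map_zero' := by
        simp only [polyNorm]
        have h : (fun x : E => ‖(0 : HPoly 𝕜 m E F) x‖) '' {x : E | ‖x‖ ≤ 1} = {0} := by
          apply Set.eq_singleton_iff_nonempty_unique_mem.2
          constructor
          · exact ⟨0, ⟨0, by simp, by simp⟩⟩
          · rintro r ⟨x, -, rfl⟩; simp
        rw [h, csSup_singleton]
      add_le' := fun P Q => by
        apply Real.sSup_le
        · rintro r ⟨x, hx, rfl⟩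
          calc ‖(P + Q) x‖ ≤ ‖P x‖ + ‖Q x‖ := norm_add_le _ _
            _ ≤ polyNorm ⇑P + polyNorm ⇑Q :=
                add_le_add (le_csSup (bddAbove_image P) ⟨x, hx, rfl⟩)
                  (le_csSup (bddAbove_image Q) ⟨x, hx, rfl⟩)
        · exact add_nonneg (polyNorm_coe_nonneg P) (polyNorm_coe_nonneg Q)
      neg' := fun P => by simp [polyNorm]
      eq_zero_of_map_eq_zero' := fun P h => by
        have h' : polyNorm ⇑P = 0 := h
        have hball : ∀ x : E, ‖x‖ ≤ 1 → P x = 0 := by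
          intro x hx
          have h1 : ‖P x‖ ≤ polyNorm ⇑P := le_csSup (bddAbove_image P) ⟨x, hx, rfl⟩
          rw [h'] at h1
          exact norm_le_zero_iff.1 h1
        ext x
        rcases eq_or_ne x 0 with rfl | hx
        · simpa using hball 0 (by simp)
        · obtain ⟨A, hA⟩ := P.isPoly'
          set c : 𝕜 := ((‖x‖ : ℝ) : 𝕜) with hcdef
          have hc : c ≠ 0 := by
            simp only [hcdef, ne_eq, RCLike.ofReal_eq_zero]
            exact norm_ne_zero_iff.2 hx
          have hu : ‖(c⁻¹ • x : E)‖ ≤ 1 := by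
            rw [norm_smul, norm_inv, hcdef, RCLike.norm_ofReal,
              abs_of_nonneg (norm_nonneg x),
              inv_mul_cancel₀ (norm_ne_zero_iff.2 hx)]
          have h0 : P (c⁻¹ • x) = 0 := hball _ hu
          have key : P x = c ^ m • P (c⁻¹ • x) := by
            show P.toFun x = c ^ m • P.toFun (c⁻¹ • x)
            rw [hA x, hA (c⁻¹ • x)]
            have h2 := A.map_smul_univ (fun _ : Fin m => c) (fun _ : Fin m => c⁻¹ • x)
            rw [Finset.prod_const] at h2
            have h3 : (fun _ : Fin m => c • c⁻¹ • x) = fun _ : Fin m => x := by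
              funext i
              rw [smul_smul, mul_inv_cancel₀ hc, one_smul]
            rw [h3] at h2
            simpa using h2
          rw [key, h0, smul_zero]
          simp }

theorem norm_def (P : HPoly 𝕜 m E F) : ‖P‖ = polyNorm ⇑P := rfl

noncomputable instance : NormedSpace 𝕜 (HPoly 𝕜 m E F) :=
  { (inferInstance : Module 𝕜 (HPoly 𝕜 m E F)) with
    norm_smul_le := fun c P => by
      show polyNorm ⇑(c • P) ≤ ‖c‖ * polyNorm ⇑P
      apply Real.sSup_le
      · rintro r ⟨x, hx, rfl⟩
        show ‖(c • P) x‖ ≤ _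
        rw [smul_apply, norm_smul]
        exact mul_le_mul_of_nonneg_left
          (le_csSup (bddAbove_image P) ⟨x, hx, rfl⟩) (norm_nonneg c)
      · exact mul_nonneg (norm_nonneg c) (polyNorm_coe_nonneg P) }

end HPoly

/-!
If the range of `P` spans a finite-dimensional subspace `S`, then `q ∘ P` depends only on the
restriction of `q` to `S`, which lies in the finite-dimensional space `𝒫(^k S)`; so `Δₖ¹ P`
has finite rank. Conversely, if `P x₁, …, P xₙ` are linearly independent, Hahn–Banach gives
continuous functionals `φᵢ` with `φᵢ (P xⱼ) = δᵢⱼ`, and the polynomials `φᵢᵏ ∘ P` in the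
range of `Δₖ¹ P` are linearly independent since `(φᵢᵏ ∘ P)(xⱼ) = δᵢⱼ`.
-/

theorem IsHomPoly.comp {𝕜 : Type*} [RCLike 𝕜] {m k : ℕ} {E F G : Type*}
    [NormedAddCommGroup E] [NormedSpace 𝕜 E] [NormedAddCommGroup F] [NormedSpace 𝕜 F]
    [NormedAddCommGroup G] [NormedSpace 𝕜 G] {q : F → G} {P : E → F}
    (hq : IsHomPoly 𝕜 k q) (hP : IsHomPoly 𝕜 m P) : IsHomPoly 𝕜 (m * k) (q ∘ P) := by
  obtain ⟨A, hA⟩ := hP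
  obtain ⟨B, hB⟩ := hq
  let C : ContinuousMultilinearMap 𝕜 (fun _ : Σ _ : Fin k, Fin m => E) G :=
    { B.toMultilinearMap.compMultilinearMap fun _ => A.toMultilinearMap with
      cont := B.cont.comp <| continuous_pi fun i =>
        A.cont.comp <| continuous_pi fun j => continuous_apply _ }
  refine ⟨C.domDomCongr (finSigmaFinEquiv.trans (finCongr (by simp [mul_comm]))), fun x => ?_⟩
  simp only [Function.comp_apply, hA, hB, ContinuousMultilinearMap.domDomCongr_apply]
  rfl

theorem LinearMap.finiteDimensional_range_of_ker_le {K V W U : Type*} [Field K]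
    [AddCommGroup V] [Module K V] [AddCommGroup W] [Module K W] [AddCommGroup U] [Module K U]
    [FiniteDimensional K W] (f : V →ₗ[K] W) (g : V →ₗ[K] U) (h : ker f ≤ ker g) :
    FiniteDimensional K (range g) := by
  have : FiniteDimensional K (V ⧸ ker f) := Module.Finite.equiv f.quotKerEquivRange.symm
  rw [← Submodule.range_liftQ _ g h]
  infer_instance

theorem LinearIndependent.exists_biorthogonal_strongDual {𝕜 F ι : Type*} [RCLike 𝕜]
    [NormedAddCommGroup F] [NormedSpace 𝕜 F] [Finite ι] [DecidableEq ι] {v : ι → F}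
    (hv : LinearIndependent 𝕜 v) :
    ∃ φ : ι → StrongDual 𝕜 F, ∀ i j, φ i (v j) = if i = j then 1 else 0 := by
  let K := Submodule.span 𝕜 (Set.range v)
  have : FiniteDimensional 𝕜 K := .span_of_finite 𝕜 (Set.finite_range v)
  let b : Module.Basis ι 𝕜 K := .span hv
  choose φ hφ using fun i => exists_extension_norm_eq K (b.coord i).toContinuousLinearMap
  refine ⟨φ, fun i j => ?_⟩
  rw [← Module.Basis.coe_span_apply hv j, (hφ i).1, LinearMap.coe_toContinuousLinearMap',
    Module.Basis.coord_apply, Module.Basis.repr_self, Finsupp.single_apply]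
  exact if_congr eq_comm rfl rfl

namespace HPoly

variable {𝕜 : Type*} [RCLike 𝕜] {m k n : ℕ} {E F G : Type*}
  [NormedAddCommGroup E] [NormedSpace 𝕜 E] [NormedAddCommGroup F] [NormedSpace 𝕜 F]
  [NormedAddCommGroup G] [NormedSpace 𝕜 G]

theorem map_smul_pow (Q : HPoly 𝕜 m E F) (c : 𝕜) (x : E) : Q (c • x) = c ^ m • Q x := by
  obtain ⟨A, hA⟩ := Q.isPoly
  simpa [hA] using A.map_smul_univ (fun _ => c) (fun _ => x)

theorem map_zero_of_one_le (hm : 1 ≤ m) (Q : HPoly 𝕜 m E F) : Q 0 = 0 := by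
  simpa [zero_pow (by omega : m ≠ 0)] using Q.map_smul_pow 0 0

theorem norm_apply_le_of_norm_le_one (Q : HPoly 𝕜 m E F) {x : E} (hx : ‖x‖ ≤ 1) :
    ‖Q x‖ ≤ ‖Q‖ :=
  le_csSup (bddAbove_image Q) ⟨x, hx, rfl⟩

theorem norm_apply_le (hm : 1 ≤ m) (Q : HPoly 𝕜 m E F) (x : E) : ‖Q x‖ ≤ ‖Q‖ * ‖x‖ ^ m := by
  rcases eq_or_ne x 0 with rfl | hx
  · simp [map_zero_of_one_le hm, zero_pow (by omega : m ≠ 0)]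
  have hx' : ‖x‖ ≠ 0 := norm_ne_zero_iff.2 hx
  let c : 𝕜 := ‖x‖
  have hc : ‖c‖ = ‖x‖ := by simp [c]
  have hunit : ‖c⁻¹ • x‖ ≤ 1 := by rw [norm_smul, norm_inv, hc, inv_mul_cancel₀ hx']
  have hscale : Q x = c ^ m • Q (c⁻¹ • x) := by
    rw [map_smul_pow, smul_smul, ← mul_pow, mul_inv_cancel₀ (by simpa [c] using hx'), one_pow,
      one_smul]
  rw [hscale, norm_smul, norm_pow, hc, mul_comm]
  gcongr
  exact Q.norm_apply_le_of_norm_le_one hunit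

theorem norm_le_of_forall {Q : HPoly 𝕜 m E F} {C : ℝ} (hC : 0 ≤ C)
    (h : ∀ x : E, ‖x‖ ≤ 1 → ‖Q x‖ ≤ C) : ‖Q‖ ≤ C :=
  Real.sSup_le (by rintro _ ⟨x, hx, rfl⟩; exact h x hx) hC

/-- The operator `Δₖ¹ P` of the paper. -/
noncomputable def precompL (hk : 1 ≤ k) (P : HPoly 𝕜 m E F) :
    HPoly 𝕜 k F G →L[𝕜] HPoly 𝕜 (m * k) E G :=
  LinearMap.mkContinuous
    { toFun q := ⟨q ∘ P, q.isPoly.comp P.isPoly⟩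
      map_add' _ _ := rfl
      map_smul' _ _ := rfl }
    (‖P‖ ^ k)
    fun q => norm_le_of_forall (by positivity) fun x hx => calc
      ‖q (P x)‖ ≤ ‖q‖ * ‖P x‖ ^ k := q.norm_apply_le hk (P x)
      _ ≤ ‖q‖ * ‖P‖ ^ k := by gcongr; exact P.norm_apply_le_of_norm_le_one hx
      _ = ‖P‖ ^ k * ‖q‖ := mul_comm _ _

def compContinuousLinearMapₗ (L : E →L[𝕜] F) : HPoly 𝕜 k F G →ₗ[𝕜] HPoly 𝕜 k E G where
  toFun q := ⟨q ∘ L, by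
    obtain ⟨B, hB⟩ := q.isPoly
    exact ⟨B.compContinuousLinearMap fun _ => L, fun x => by simp [hB]⟩⟩
  map_add' _ _ := rfl
  map_smul' _ _ := rfl

@[simp] theorem compContinuousLinearMapₗ_apply (L : E →L[𝕜] F) (q : HPoly 𝕜 k F G) (x : E) :
    compContinuousLinearMapₗ L q x = q (L x) :=
  rfl

def evalₗ (x : E) : HPoly 𝕜 m E G →ₗ[𝕜] G where
  toFun Q := Q x
  map_add' _ _ := rfl
  map_smul' _ _ := rfl

@[simp] theorem evalₗ_apply (x : E) (Q : HPoly 𝕜 m E G) : evalₗ x Q = Q x :=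
  rfl

def dualPow (φ : StrongDual 𝕜 F) (k : ℕ) : HPoly 𝕜 k F 𝕜 :=
  ⟨fun y => φ y ^ k,
    ⟨(ContinuousMultilinearMap.mkPiAlgebra 𝕜 (Fin k) 𝕜).compContinuousLinearMap fun _ => φ,
      fun y => by simp⟩⟩

@[simp] theorem dualPow_apply (φ : StrongDual 𝕜 F) (k : ℕ) (y : F) : dualPow φ k y = φ y ^ k :=
  rfl

instance [FiniteDimensional 𝕜 E] [FiniteDimensional 𝕜 G] :
    FiniteDimensional 𝕜 (HPoly 𝕜 m E G) := by
  have : FiniteDimensional 𝕜 (ContinuousMultilinearMap 𝕜 (fun _ : Fin m => E) G) :=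
    .of_injective (ContinuousMultilinearMap.toMultilinearMapLinear (R' := 𝕜))
      ContinuousMultilinearMap.toMultilinearMap_injective
  let diag : ContinuousMultilinearMap 𝕜 (fun _ : Fin m => E) G →ₗ[𝕜] HPoly 𝕜 m E G :=
    { toFun B := ⟨fun x => B fun _ => x, B, fun _ => rfl⟩
      map_add' _ _ := rfl
      map_smul' _ _ := rfl }
  refine Module.Finite.of_surjective diag fun Q => ?_
  obtain ⟨B, hB⟩ := Q.isPoly
  exact ⟨B, ext fun x => (hB x).symm⟩

theorem finiteDimensional_range_of_finiteDimensional_span [FiniteDimensional 𝕜 G] {P : E → F}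
    (hP : FiniteDimensional 𝕜 (Submodule.span 𝕜 (Set.range P)))
    (T : HPoly 𝕜 k F G →ₗ[𝕜] HPoly 𝕜 n E G) (hT : ∀ q x, T q x = q (P x)) :
    FiniteDimensional 𝕜 (LinearMap.range T) := by
  let S := Submodule.span 𝕜 (Set.range P)
  refine LinearMap.finiteDimensional_range_of_ker_le
    (compContinuousLinearMapₗ S.subtypeL) T fun q hq => ?_
  rw [LinearMap.mem_ker] at hq ⊢
  ext x
  have hPx : q (P x) = 0 := by
    simpa using DFunLike.congr_fun hq ⟨P x, Submodule.subset_span ⟨x, rfl⟩⟩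
  simp [hT, hPx]

theorem card_le_finrank_range (hk : 1 ≤ k) {P : E → F}
    (T : HPoly 𝕜 k F 𝕜 →ₗ[𝕜] HPoly 𝕜 n E 𝕜) (hT : ∀ q x, T q x = q (P x))
    [FiniteDimensional 𝕜 (LinearMap.range T)] {ι : Type*} [Fintype ι] {x : ι → E}
    (hx : LinearIndependent 𝕜 (P ∘ x)) : Fintype.card ι ≤ Module.finrank 𝕜 (LinearMap.range T) := by
  classical
  obtain ⟨φ, hφ⟩ := hx.exists_biorthogonal_strongDual
  let w i := T (dualPow (φ i) k)
  have hw : LinearIndependent 𝕜 w := by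
    have hdelta : (LinearMap.pi fun j => evalₗ (x j)) ∘ w = fun i => Pi.single i 1 := by
      ext i j
      have hij : φ i (P (x j)) = if i = j then 1 else 0 := hφ i j
      simp [w, hT, hij, Pi.single_apply, eq_comm, zero_pow (by omega : k ≠ 0)]
    exact .of_comp (LinearMap.pi fun j => evalₗ (x j))
      (hdelta ▸ Pi.linearIndependent_single_one ι 𝕜)
  calc Fintype.card ι = Module.finrank 𝕜 (Submodule.span 𝕜 (Set.range w)) :=
        (finrank_span_eq_card hw).symm
    _ ≤ Module.finrank 𝕜 (LinearMap.range T) :=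
        Submodule.finrank_mono <| Submodule.span_le.2 <| Set.range_subset_iff.2 fun i =>
          LinearMap.mem_range_self T _

theorem finiteDimensional_span_of_finiteDimensional_range (hk : 1 ≤ k) {P : E → F}
    (T : HPoly 𝕜 k F 𝕜 →ₗ[𝕜] HPoly 𝕜 n E 𝕜) (hT : ∀ q x, T q x = q (P x))
    [FiniteDimensional 𝕜 (LinearMap.range T)] :
    FiniteDimensional 𝕜 (Submodule.span 𝕜 (Set.range P)) := by
  obtain ⟨b, hb_sub, hb_span, hb_ind⟩ := exists_linearIndependent 𝕜 (Set.range P)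
  have hb : b.Finite := by
    by_contra hinf
    obtain ⟨s, hs_sub, hs_card⟩ :=
      Set.Infinite.exists_subset_card_eq hinf (Module.finrank 𝕜 (LinearMap.range T) + 1)
    choose x hx using fun y : s => hb_sub (hs_sub y.2)
    have hPx : P ∘ x = fun y : s => (y : F) := funext hx
    have := card_le_finrank_range hk T hT (x := x) <| hPx ▸
      hb_ind.comp (Set.inclusion hs_sub) (Set.inclusion_injective hs_sub)
    simp only [Fintype.card_coe, hs_card] at this
    omega
  rw [← hb_span]
  exact .span_of_finite 𝕜 hb

/-- The paper's condition "`Δₖ¹ P` has finite rank". -/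
def HasFiniteRankPrecomp (𝕜 : Type*) [RCLike 𝕜] (m k : ℕ) {E F : Type*}
    [NormedAddCommGroup E] [NormedSpace 𝕜 E] [NormedAddCommGroup F] [NormedSpace 𝕜 F]
    (P : E → F) : Prop :=
  ∃ T : HPoly 𝕜 k F 𝕜 →L[𝕜] HPoly 𝕜 (m * k) E 𝕜, (∀ q x, T q x = q (P x)) ∧
    FiniteDimensional 𝕜 (LinearMap.range (T : HPoly 𝕜 k F 𝕜 →ₗ[𝕜] HPoly 𝕜 (m * k) E 𝕜))

theorem hasFiniteRankPrecomp_iff (hk : 1 ≤ k) {P : E → F} (hP : IsHomPoly 𝕜 m P) :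
    HasFiniteRankPrecomp 𝕜 m k P ↔ FiniteDimensional 𝕜 (Submodule.span 𝕜 (Set.range P)) := by
  refine ⟨fun ⟨T, hT, _⟩ => ?_, fun hS => ?_⟩
  · exact finiteDimensional_span_of_finiteDimensional_range hk
      (T : HPoly 𝕜 k F 𝕜 →ₗ[𝕜] HPoly 𝕜 (m * k) E 𝕜) hT
  · exact ⟨precompL hk ⟨P, hP⟩, fun _ _ => rfl,
      finiteDimensional_range_of_finiteDimensional_span hS _ fun _ _ => rfl⟩

end HPoly

theorem statement18_general (𝕜 : Type*) [RCLike 𝕜] (E F : Type*)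
    [NormedAddCommGroup E] [NormedSpace 𝕜 E]
    [NormedAddCommGroup F] [NormedSpace 𝕜 F]
    (m : ℕ) (P : E → F) (hP : IsHomPoly 𝕜 m P) :
    (FiniteDimensional 𝕜 (Submodule.span 𝕜 (Set.range P)) ↔
      ∀ k : ℕ, 1 ≤ k →
        ∃ T : HPoly 𝕜 k F 𝕜 →L[𝕜] HPoly 𝕜 (m * k) E 𝕜,
          (∀ (q : HPoly 𝕜 k F 𝕜) (x : E), T q x = q (P x)) ∧
          FiniteDimensional 𝕜
            (LinearMap.range (T : HPoly 𝕜 k F 𝕜 →ₗ[𝕜] HPoly 𝕜 (m * k) E 𝕜))) ∧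
    (FiniteDimensional 𝕜 (Submodule.span 𝕜 (Set.range P)) ↔
      ∃ k : ℕ, 1 ≤ k ∧
        ∃ T : HPoly 𝕜 k F 𝕜 →L[𝕜] HPoly 𝕜 (m * k) E 𝕜,
          (∀ (q : HPoly 𝕜 k F 𝕜) (x : E), T q x = q (P x)) ∧
          FiniteDimensional 𝕜
            (LinearMap.range (T : HPoly 𝕜 k F 𝕜 →ₗ[𝕜] HPoly 𝕜 (m * k) E 𝕜))) := by
  have key (k : ℕ) (hk : 1 ≤ k) := HPoly.hasFiniteRankPrecomp_iff hk hP
  exact ⟨⟨fun ha k hk => (key k hk).2 ha, fun hb => (key 1 le_rfl).1 (hb 1 le_rfl)⟩,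
    ⟨fun ha => ⟨1, le_rfl, (key 1 le_rfl).2 ha⟩, fun ⟨k, hk, hT⟩ => (key k hk).1 hT⟩⟩

/-- For `P ∈ 𝒫(^mE;F)` the following are equivalent: (a) `P` has finite
rank; (b) for every `k ≥ 1` the continuous linear operator `Δₖ¹ P : 𝒫(^kF) → 𝒫(^{mk}E)`,
`q ↦ q ∘ P`, has finite rank; (c) `Δₖ¹ P` has finite rank for some `k ≥ 1`. -/
theorem statement18 (𝕜 : Type*) [RCLike 𝕜] (E F : Type*)
    [NormedAddCommGroup E] [NormedSpace 𝕜 E] [CompleteSpace E]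
    [NormedAddCommGroup F] [NormedSpace 𝕜 F] [CompleteSpace F]
    (m : ℕ) (hm : 1 ≤ m) (P : E → F) (hP : IsHomPoly 𝕜 m P) :
    (FiniteDimensional 𝕜 (Submodule.span 𝕜 (Set.range P)) ↔
      ∀ k : ℕ, 1 ≤ k →
        ∃ T : HPoly 𝕜 k F 𝕜 →L[𝕜] HPoly 𝕜 (m * k) E 𝕜,
          (∀ (q : HPoly 𝕜 k F 𝕜) (x : E), T q x = q (P x)) ∧
          FiniteDimensional 𝕜
            (LinearMap.range (T : HPoly 𝕜 k F 𝕜 →ₗ[𝕜] HPoly 𝕜 (m * k) E 𝕜))) ∧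
    (FiniteDimensional 𝕜 (Submodule.span 𝕜 (Set.range P)) ↔
      ∃ k : ℕ, 1 ≤ k ∧
        ∃ T : HPoly 𝕜 k F 𝕜 →L[𝕜] HPoly 𝕜 (m * k) E 𝕜,
          (∀ (q : HPoly 𝕜 k F 𝕜) (x : E), T q x = q (P x)) ∧
          FiniteDimensional 𝕜
            (LinearMap.range (T : HPoly 𝕜 k F 𝕜 →ₗ[𝕜] HPoly 𝕜 (m * k) E 𝕜))) :=
  statement18_general 𝕜 E F m P hP
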